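/- Laver's version of the minimal bad array lemma implies Simpson's version: if for every partial ranking ≤' of a quasi order ≤_Q and every bad array f₀ on a block there exists a bad array f ≤̇' f₀ admitting no bad g <̇' f, then for every bad Q-array f₀ there is a Q-array f ≤' f₀ that is ≤'-minimal bad (no bad array g with g <' f pointwise on its domain). -/
import Mathlib


/-- `s` is a finite initial segment of the infinite set `X ⊆ ℕ`. -/
def IsInitSeg (s : Finset ℕ) (X : Set ℕ) : Prop :=
  ↑s ⊆ X ∧ ∀ x ∈ X, x ∉ s → ∀ y ∈ s, y < x

/-- `s ⊑ t`: `s` is an initial segment of the finite set `t` (possibly `s = t`). -/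
def FinInitSeg (s t : Finset ℕ) : Prop :=
  s ⊆ t ∧ ∀ x ∈ t, x ∉ s → ∀ y ∈ s, y < x

/-- `X⁻`: remove the least element of `X`. -/
def minus (X : Set ℕ) : Set ℕ := X \ {sInf X}

/-- `[V]^ω`: infinite subsets of `V`. -/
def InfSub (V : Set ℕ) : Set (Set ℕ) := {X | X ⊆ V ∧ X.Infinite}

/-- Continuity of `f` on `[V]^ω`. -/
def ContOn {Q : Type*} (V : Set ℕ) (f : Set ℕ → Q) : Prop :=
  ∀ X ∈ InfSub V, ∃ s : Finset ℕ, IsInitSeg s X ∧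
    ∀ Y ∈ InfSub V, IsInitSeg s Y → f Y = f X

/-- `f` is `R`-bad on `[V]^ω`. -/
def BadOn {Q : Type*} (R : Q → Q → Prop) (V : Set ℕ) (f : Set ℕ → Q) : Prop :=
  ¬ ∃ X ∈ InfSub V, R (f X) (f (minus X))

/-- The base `∪B` of a set of finite sets. -/
def blockBase (B : Set (Finset ℕ)) : Set ℕ := ⋃ t ∈ B, (↑t : Set ℕ)

/-- `B` is a block: nonempty finite sets, infinite base, and every infinite
subset of the base has a unique initial segment in `B`. -/
def IsBlock (B : Set (Finset ℕ)) : Prop :=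
  (∀ t ∈ B, t.Nonempty) ∧ (blockBase B).Infinite ∧
    ∀ X ∈ InfSub (blockBase B), ∃! s, s ∈ B ∧ IsInitSeg s X

/-- `B ≤̇ C` for blocks. -/
def LeDot (B C : Set (Finset ℕ)) : Prop :=
  blockBase B ⊆ blockBase C ∧ ∀ t ∈ B, ∃ s ∈ C, FinInitSeg s t

/-- `B <̇ C` for blocks. -/
def LtDot (B C : Set (Finset ℕ)) : Prop := LeDot B C ∧ ¬ B ⊆ C

/-- `E(C,B,n)`. -/
def Eset (C B : Set (Finset ℕ)) (n : ℕ) : Set (Finset ℕ) :=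
  {t | t ∈ B ∧ ↑t ⊆ Set.Iic n ∪ blockBase C ∧ ¬ (↑t : Set ℕ) ⊆ blockBase C}

/-- `M(C,B)`. -/
def Mset (C B : Set (Finset ℕ)) : Set ℕ :=
  {n | ∃ t ∈ B, (↑t : Set ℕ) ⊆ blockBase C ∧ t ∉ C ∧ n ∈ t ∧ ∀ x ∈ t, x ≤ n}

/-- `m(C,B)`. -/
noncomputable def mMin (C B : Set (Finset ℕ)) : ℕ := sInf (Mset C B)

/-- `s ◁ t` relative to the block `B`: some `X ∈ [∪B]^ω` has `s ⊏ X` and `t ⊏ X⁻`. -/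
def Tri (B : Set (Finset ℕ)) (s t : Finset ℕ) : Prop :=
  ∃ X ∈ InfSub (blockBase B), IsInitSeg s X ∧ IsInitSeg t (minus X)

/-- `f : B → Q` is `R`-bad (as an array on the block `B`). -/
def BadBlk {Q : Type*} (R : Q → Q → Prop) (B : Set (Finset ℕ)) (f : Finset ℕ → Q) : Prop :=
  ¬ ∃ s ∈ B, ∃ t ∈ B, Tri B s t ∧ R (f s) (f t)

/-- `f ≤̇' g` for arrays `f : B → Q` and `g : C → Q`. -/
def ArrLeDot {Q : Type*} (le' : Q → Q → Prop) (f : Finset ℕ → Q) (B : Set (Finset ℕ))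
    (g : Finset ℕ → Q) (C : Set (Finset ℕ)) : Prop :=
  LeDot B C ∧ (∀ t ∈ B ∩ C, f t = g t) ∧
    ∀ s ∈ C, ∀ t ∈ B, FinInitSeg s t → s ≠ t → le' (f t) (g s) ∧ f t ≠ g s

/-- `f <̇' g` for arrays on blocks. -/
def ArrLtDot {Q : Type*} (le' : Q → Q → Prop) (f : Finset ℕ → Q) (B : Set (Finset ℕ))
    (g : Finset ℕ → Q) (C : Set (Finset ℕ)) : Prop :=
  ArrLeDot le' f B g C ∧ ¬ B ⊆ C

section Aux

lemma finInitSeg_refl (s : Finset ℕ) : FinInitSeg s s :=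
  ⟨subset_rfl, fun x hx hx' _ _ => absurd hx hx'⟩

lemma finInitSeg_trans {s t u : Finset ℕ} (h1 : FinInitSeg s t) (h2 : FinInitSeg t u) :
    FinInitSeg s u := by
  refine ⟨h1.1.trans h2.1, fun x hx hxs y hy => ?_⟩
  by_cases hxt : x ∈ t
  · exact h1.2 x hxt hxs y hy
  · exact h2.2 x hx hxt y (h1.1 hy)

lemma isInitSeg_trans {s t : Finset ℕ} {X : Set ℕ} (h1 : FinInitSeg s t)
    (h2 : IsInitSeg t X) : IsInitSeg s X := by
  refine ⟨fun x hx => h2.1 (h1.1 hx), fun x hx hxs y hy => ?_⟩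
  by_cases hxt : x ∈ t
  · exact h1.2 x hxt hxs y hy
  · exact h2.2 x hx hxt y (h1.1 hy)

lemma finInitSeg_of_subset {s t : Finset ℕ} {X : Set ℕ} (hs : IsInitSeg s X)
    (ht : (↑t : Set ℕ) ⊆ X) (hst : s ⊆ t) : FinInitSeg s t :=
  ⟨hst, fun x hx hxs y hy => hs.2 x (ht hx) hxs y hy⟩

lemma initSeg_total {s t : Finset ℕ} {X : Set ℕ} (hs : IsInitSeg s X) (ht : IsInitSeg t X) :
    FinInitSeg s t ∨ FinInitSeg t s := by
  by_cases h : s ⊆ t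
  · exact Or.inl (finInitSeg_of_subset hs ht.1 h)
  · obtain ⟨a, ha, hat⟩ := Finset.not_subset.mp h
    right
    refine finInitSeg_of_subset ht hs.1 ?_
    intro x hx
    by_contra hxs
    have h1 := hs.2 x (ht.1 hx) hxs a ha
    have h2 := ht.2 a (hs.1 ha) hat x hx
    omega

/-- Canonical extension of a finite set to an infinite subset of `U`. -/
def extSet (U : Set ℕ) (s : Finset ℕ) : Set ℕ := ↑s ∪ {x | x ∈ U ∧ ∀ y ∈ s, y < x}

lemma extSet_spec {U : Set ℕ} (hU : U.Infinite) {s : Finset ℕ} (hs : (↑s : Set ℕ) ⊆ U) :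
    extSet U s ∈ InfSub U ∧ IsInitSeg s (extSet U s) := by
  have hsub : extSet U s ⊆ U := by
    rintro x (hx | hx)
    · exact hs hx
    · exact hx.1
  have hinf : (extSet U s).Infinite := by
    refine Set.Infinite.mono ?_ (hU.diff (Set.finite_Iic (s.sup id)))
    rintro x ⟨hxU, hxn⟩
    right
    refine ⟨hxU, fun y hy => ?_⟩
    have : y ≤ s.sup id := Finset.le_sup (f := id) hy
    simp only [Set.mem_Iic] at hxn
    omega
  refine ⟨⟨hsub, hinf⟩, fun x hx => Or.inl hx, ?_⟩
  rintro x (hx | hx) hxs y hy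
  · exact absurd hx hxs
  · exact hx.2 y hy

lemma minus_subset (X : Set ℕ) : minus X ⊆ X := Set.diff_subset

lemma minus_infinite {X : Set ℕ} (h : X.Infinite) : (minus X).Infinite :=
  h.diff (Set.finite_singleton _)

/-- Absorb two initial segments into one nonempty initial segment strictly
extending the second one. -/
lemma absorb {U X : Set ℕ} (hX : X ∈ InfSub U) {s s' : Finset ℕ}
    (hs : IsInitSeg s X) (hs' : IsInitSeg s' X) :
    ∃ t : Finset ℕ, t.Nonempty ∧ IsInitSeg t X ∧ FinInitSeg s t ∧ FinInitSeg s' t ∧ s' ≠ t := by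
  classical
  set n := max (s.sup id) (s'.sup id) with hn
  obtain ⟨x, hxX, hxn⟩ := (hX.2.diff (Set.finite_Iic n)).nonempty
  simp only [Set.mem_Iic, not_le] at hxn
  have hfin : (X ∩ Set.Iic x).Finite := (Set.finite_Iic x).inter_of_right X
  set t : Finset ℕ := hfin.toFinset with ht
  have hmem : ∀ y, y ∈ t ↔ y ∈ X ∧ y ≤ x := by
    intro y; rw [ht, Set.Finite.mem_toFinset]; rfl
  have hxt : x ∈ t := (hmem x).mpr ⟨hxX, le_rfl⟩
  have htX : (↑t : Set ℕ) ⊆ X := fun y hy => ((hmem y).mp hy).1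
  have htinit : IsInitSeg t X := by
    refine ⟨htX, fun z hz hzt y hy => ?_⟩
    have h1 : z ∉ Set.Iic x := fun hle => hzt ((hmem z).mpr ⟨hz, hle⟩)
    simp only [Set.mem_Iic, not_le] at h1
    have h2 : y ≤ x := ((hmem y).mp hy).2
    omega
  have hst : s ⊆ t := by
    intro y hy
    have hy1 : y ≤ s.sup id := Finset.le_sup (f := id) hy
    exact (hmem y).mpr ⟨hs.1 hy, by omega⟩
  have hs't : s' ⊆ t := by
    intro y hy
    have hy1 : y ≤ s'.sup id := Finset.le_sup (f := id) hy
    exact (hmem y).mpr ⟨hs'.1 hy, by omega⟩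
  refine ⟨t, ⟨x, hxt⟩, htinit, finInitSeg_of_subset hs htX hst,
    finInitSeg_of_subset hs' htX hs't, ?_⟩
  intro he
  have : x ∈ s' := he ▸ hxt
  have : x ≤ s'.sup id := Finset.le_sup (f := id) this
  omega

/-- `s` determines the value of `f` on all its infinite extensions within `V`. -/
def GoodF {Q : Type*} (V : Set ℕ) (f : Set ℕ → Q) (s : Finset ℕ) : Prop :=
  ∀ Y ∈ InfSub V, IsInitSeg s Y → ∀ Z ∈ InfSub V, IsInitSeg s Z → f Y = f Z

lemma goodF_mono {Q : Type*} {V : Set ℕ} {f : Set ℕ → Q} {s t : Finset ℕ}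
    (h : FinInitSeg s t) (hs : GoodF V f s) : GoodF V f t :=
  fun Y hY hYt Z hZ hZt => hs Y hY (isInitSeg_trans h hYt) Z hZ (isInitSeg_trans h hZt)

lemma goodF_val {Q : Type*} {V : Set ℕ} (hV : V.Infinite) {f : Set ℕ → Q} {s : Finset ℕ}
    (hsV : (↑s : Set ℕ) ⊆ V) (hg : GoodF V f s) {X : Set ℕ} (hX : X ∈ InfSub V)
    (hsX : IsInitSeg s X) : f (extSet V s) = f X := by
  obtain ⟨h1, h2⟩ := extSet_spec hV hsV
  exact hg _ h1 h2 X hX hsX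

/-- Build a block from an initial-segment-monotone predicate. -/
lemma blockOfPred (U : Set ℕ) (hU : U.Infinite) (P : Finset ℕ → Prop)
    (hex : ∀ X ∈ InfSub U, ∃ s : Finset ℕ, s.Nonempty ∧ IsInitSeg s X ∧ P s) :
    ∃ D : Set (Finset ℕ), IsBlock D ∧ blockBase D ⊆ U ∧
      (∀ t ∈ D, P t ∧ (↑t : Set ℕ) ⊆ U) ∧
      ∀ X ∈ InfSub U, ∃ t ∈ D, IsInitSeg t X := by
  classical
  set D : Set (Finset ℕ) :=
    {t | t.Nonempty ∧ (↑t : Set ℕ) ⊆ U ∧ P t ∧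
      ∀ s : Finset ℕ, s.Nonempty → FinInitSeg s t → s ≠ t → ¬ P s} with hD
  have hmem : ∀ X ∈ InfSub U, ∃ t ∈ D, IsInitSeg t X := by
    intro X hX
    obtain ⟨s₀, hs₀ne, hs₀X, hs₀P⟩ := hex X hX
    set S : Set ℕ := {n | ∃ s : Finset ℕ, s.card = n ∧ s.Nonempty ∧ FinInitSeg s s₀ ∧ P s}
      with hS
    have hSne : s₀.card ∈ S := ⟨s₀, rfl, hs₀ne, finInitSeg_refl s₀, hs₀P⟩
    obtain ⟨s, hcard, hsne, hss₀, hsP⟩ := Nat.sInf_mem (⟨_, hSne⟩ : S.Nonempty)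
    have hsX : IsInitSeg s X := isInitSeg_trans hss₀ hs₀X
    refine ⟨s, ?_, hsX⟩
    simp only [hD, Set.mem_setOf_eq]
    refine ⟨hsne, fun x hx => hX.1 (hsX.1 hx), hsP, ?_⟩
    intro s' hs'ne hs's hne hs'P
    have hlt : s'.card < s.card :=
      Finset.card_lt_card (Finset.ssubset_iff_subset_ne.mpr ⟨hs's.1, hne⟩)
    have hge : sInf S ≤ s'.card :=
      Nat.sInf_le ⟨s', rfl, hs'ne, finInitSeg_trans hs's hss₀, hs'P⟩
    omega
  have hbase : blockBase D ⊆ U := by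
    intro x hx
    simp only [blockBase, Set.mem_iUnion] at hx
    obtain ⟨t, ht, hxt⟩ := hx
    exact ht.2.1 hxt
  have hinf : (blockBase D).Infinite := by
    by_contra h
    obtain ⟨b, hb⟩ := (Set.not_infinite.mp h).bddAbove
    have hXb : (U \ Set.Iic b) ∈ InfSub U := ⟨Set.diff_subset, hU.diff (Set.finite_Iic b)⟩
    obtain ⟨t, htD, htX⟩ := hmem _ hXb
    obtain ⟨y, hy⟩ := htD.1
    have hyX : y ∈ U \ Set.Iic b := htX.1 hy
    have hyb : y ∈ blockBase D := Set.mem_biUnion htD hy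
    exact hyX.2 (hb hyb)
  refine ⟨D, ⟨fun t ht => ht.1, hinf, ?_⟩, hbase, fun t ht => ⟨ht.2.2.1, ht.2.1⟩, hmem⟩
  intro X hX
  have hXU : X ∈ InfSub U := ⟨hX.1.trans hbase, hX.2⟩
  obtain ⟨t, htD, htX⟩ := hmem X hXU
  refine ⟨t, ⟨htD, htX⟩, ?_⟩
  rintro t' ⟨ht'D, ht'X⟩
  rcases initSeg_total ht'X htX with h | h
  · by_contra hne
    exact htD.2.2.2 t' ht'D.1 h hne ht'D.2.2.1
  · by_contra hne
    exact ht'D.2.2.2 t htD.1 h (fun he => hne he.symm) htD.2.2.1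

end Aux
/-- Laver's version of the minimal bad array lemma implies
Simpson's version. -/
theorem laver_implies_simpson {Q : Type*} (leQ le' : Q → Q → Prop)
    (hreflQ : ∀ q, leQ q q) (htransQ : ∀ p q r, leQ p q → leQ q r → leQ p r)
    (hrefl : ∀ q, le' q q) (hanti : ∀ p q, le' p q → le' q p → p = q)
    (htrans : ∀ p q r, le' p q → le' q r → le' p r)
    (hwf : WellFounded (fun a b => le' a b ∧ a ≠ b))
    (hrank : ∀ p q r, leQ p q → le' q r → leQ p r)
    (laver : ∀ (B : Set (Finset ℕ)) (f₀ : Finset ℕ → Q), IsBlock B → BadBlk leQ B f₀ →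
      ∃ (C : Set (Finset ℕ)) (f : Finset ℕ → Q), IsBlock C ∧ BadBlk leQ C f ∧
        ArrLeDot le' f C f₀ B ∧
        ¬ ∃ (D : Set (Finset ℕ)) (g : Finset ℕ → Q),
            IsBlock D ∧ BadBlk leQ D g ∧ ArrLtDot le' g D f C) :
    ∀ (V : Set ℕ) (f₀ : Set ℕ → Q), V.Infinite → ContOn V f₀ → BadOn leQ V f₀ →
      ∃ (W : Set ℕ) (f : Set ℕ → Q), W ⊆ V ∧ W.Infinite ∧ ContOn W f ∧ BadOn leQ W f ∧
        (∀ X ∈ InfSub W, le' (f X) (f₀ X)) ∧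
        ¬ ∃ (U : Set ℕ) (g : Set ℕ → Q), U ⊆ W ∧ U.Infinite ∧ ContOn U g ∧
            BadOn leQ U g ∧ ∀ X ∈ InfSub U, le' (g X) (f X) ∧ g X ≠ f X := by
  intro V f₀ hV hcont hbad
  classical
  -- Build the block `B` of minimal nonempty continuity witnesses of `f₀`.
  have hex : ∀ X ∈ InfSub V, ∃ s : Finset ℕ, s.Nonempty ∧ IsInitSeg s X ∧ GoodF V f₀ s := by
    intro X hX
    obtain ⟨s₀, hs₀X, hs₀⟩ := hcont X hX
    obtain ⟨t, htne, htX, hst, -, -⟩ := absorb hX hs₀X hs₀X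
    refine ⟨t, htne, htX, ?_⟩
    intro Y hY hYt Z hZ hZt
    rw [hs₀ Y hY (isInitSeg_trans hst hYt), hs₀ Z hZ (isInitSeg_trans hst hZt)]
  obtain ⟨B, hBblock, hBbase, hBgood, hBex⟩ := blockOfPred V hV (GoodF V f₀) hex
  set f₀' : Finset ℕ → Q := fun s => f₀ (extSet V s) with hf₀'
  have hf₀val : ∀ s ∈ B, ∀ X ∈ InfSub V, IsInitSeg s X → f₀' s = f₀ X := by
    intro s hs X hX hsX
    exact goodF_val hV (hBgood s hs).2 (hBgood s hs).1 hX hsX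
  have hBbad : BadBlk leQ B f₀' := by
    rintro ⟨s, hsB, t, htB, ⟨X, hXbase, hsX, htX⟩, hle⟩
    have hXV : X ∈ InfSub V := ⟨hXbase.1.trans hBbase, hXbase.2⟩
    have hmXV : minus X ∈ InfSub V := ⟨(minus_subset X).trans hXV.1, minus_infinite hXV.2⟩
    refine hbad ⟨X, hXV, ?_⟩
    rw [← hf₀val s hsB X hXV hsX, ← hf₀val t htB (minus X) hmXV htX]
    exact hle
  obtain ⟨C, f, hC, hCbad, hCle, hCmin⟩ := laver B f₀' hBblock hBbad
  -- The minimal array on `[W]^ω` for `W = blockBase C`.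
  have hWV : blockBase C ⊆ V := hCle.1.1.trans hBbase
  have hWinf : (blockBase C).Infinite := hC.2.1
  set sg : Set ℕ → Finset ℕ := fun X =>
    if h : ∃ s, s ∈ C ∧ IsInitSeg s X then h.choose else ∅ with hsg
  have hsg1 : ∀ X ∈ InfSub (blockBase C), sg X ∈ C ∧ IsInitSeg (sg X) X := by
    intro X hX
    have h : ∃ s, s ∈ C ∧ IsInitSeg s X := (hC.2.2 X hX).exists
    simp only [hsg, dif_pos h]
    exact h.choose_spec
  have hsg2 : ∀ X ∈ InfSub (blockBase C), ∀ s ∈ C, IsInitSeg s X → sg X = s := by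
    intro X hX s hs hsX
    exact (hC.2.2 X hX).unique ⟨(hsg1 X hX).1, (hsg1 X hX).2⟩ ⟨hs, hsX⟩
  set F : Set ℕ → Q := fun X => f (sg X) with hF
  refine ⟨blockBase C, F, hWV, hWinf, ?_, ?_, ?_, ?_⟩
  · -- continuity
    intro X hX
    refine ⟨sg X, (hsg1 X hX).2, fun Y hY hYseg => ?_⟩
    show f (sg Y) = f (sg X)
    rw [hsg2 Y hY (sg X) (hsg1 X hX).1 hYseg]
  · -- badness
    rintro ⟨X, hX, hle⟩
    have hmX : minus X ∈ InfSub (blockBase C) :=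
      ⟨(minus_subset X).trans hX.1, minus_infinite hX.2⟩
    exact hCbad ⟨sg X, (hsg1 X hX).1, sg (minus X), (hsg1 _ hmX).1,
      ⟨X, hX, (hsg1 X hX).2, (hsg1 _ hmX).2⟩, hle⟩
  · -- F ≤' f₀ pointwise
    intro X hX
    have hXV : X ∈ InfSub V := ⟨hX.1.trans hWV, hX.2⟩
    obtain ⟨hsC, hsX⟩ := hsg1 X hX
    obtain ⟨u, huB, hus⟩ := hCle.1.2 (sg X) hsC
    have huX : IsInitSeg u X := isInitSeg_trans hus hsX
    have huval : f₀' u = f₀ X := hf₀val u huB X hXV huX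
    by_cases he : u = sg X
    · have : f (sg X) = f₀' (sg X) := hCle.2.1 (sg X) ⟨hsC, he ▸ huB⟩
      show le' (f (sg X)) (f₀ X)
      rw [this, ← he, huval]
      exact hrefl _
    · have h3 := hCle.2.2 u huB (sg X) hsC hus he
      show le' (f (sg X)) (f₀ X)
      rw [← huval]
      exact h3.1
  · -- minimality
    rintro ⟨U, g, hUW, hUinf, hgcont, hgbad, hglt⟩
    set P : Finset ℕ → Prop :=
      fun t => GoodF U g t ∧ ∃ s' ∈ C, FinInitSeg s' t ∧ s' ≠ t with hP
    have hex' : ∀ X ∈ InfSub U, ∃ s : Finset ℕ, s.Nonempty ∧ IsInitSeg s X ∧ P s := by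
      intro X hX
      have hXW : X ∈ InfSub (blockBase C) := ⟨hX.1.trans hUW, hX.2⟩
      obtain ⟨hs'C, hs'X⟩ := hsg1 X hXW
      obtain ⟨s₀, hs₀X, hs₀⟩ := hgcont X hX
      obtain ⟨t, htne, htX, hs₀t, hs't, hne⟩ := absorb hX hs₀X hs'X
      refine ⟨t, htne, htX, ?_, sg X, hs'C, hs't, hne⟩
      intro Y hY hYt Z hZ hZt
      rw [hs₀ Y hY (isInitSeg_trans hs₀t hYt), hs₀ Z hZ (isInitSeg_trans hs₀t hZt)]
    obtain ⟨D, hDblock, hDbase, hDP, hDex⟩ := blockOfPred U hUinf P hex'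
    set g' : Finset ℕ → Q := fun t => g (extSet U t) with hg'
    have hgval : ∀ t ∈ D, ∀ X ∈ InfSub U, IsInitSeg t X → g' t = g X := by
      intro t ht X hX htX
      exact goodF_val hUinf (hDP t ht).2 (hDP t ht).1.1 hX htX
    have hDbadg : BadBlk leQ D g' := by
      rintro ⟨s, hsD, t, htD, ⟨X, hXbase, hsX, htX⟩, hle⟩
      have hXU : X ∈ InfSub U := ⟨hXbase.1.trans hDbase, hXbase.2⟩
      have hmXU : minus X ∈ InfSub U := ⟨(minus_subset X).trans hXU.1, minus_infinite hXU.2⟩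
      refine hgbad ⟨X, hXU, ?_⟩
      rw [← hgval s hsD X hXU hsX, ← hgval t htD (minus X) hmXU htX]
      exact hle
    -- D and C are disjoint
    have hDC : ∀ t ∈ D, t ∉ C := by
      intro t htD htC
      obtain ⟨s', hs'C, hs't, hne⟩ := (hDP t htD).1.2
      have htW : (↑t : Set ℕ) ⊆ blockBase C := (hDP t htD).2.trans hUW
      obtain ⟨hXW, htX⟩ := extSet_spec hWinf htW
      exact hne ((hC.2.2 _ hXW).unique ⟨hs'C, isInitSeg_trans hs't htX⟩ ⟨htC, htX⟩)
    obtain ⟨t₀, ht₀D, -⟩ := hDex U ⟨subset_rfl, hUinf⟩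
    refine hCmin ⟨D, g', hDblock, hDbadg, ⟨⟨hDbase.trans hUW, ?_⟩, ?_, ?_⟩, ?_⟩
    · intro t htD
      obtain ⟨s', hs'C, hs't, -⟩ := (hDP t htD).1.2
      exact ⟨s', hs'C, hs't⟩
    · intro t ht
      exact absurd ht.2 (hDC t ht.1)
    · intro s hsC t htD hst hne
      have htU : (↑t : Set ℕ) ⊆ U := (hDP t htD).2
      obtain ⟨hXU, htX⟩ := extSet_spec hUinf htU
      have hXW : extSet U t ∈ InfSub (blockBase C) := ⟨hXU.1.trans hUW, hXU.2⟩
      have hsgX : sg (extSet U t) = s := hsg2 _ hXW s hsC (isInitSeg_trans hst htX)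
      have h1 : g' t = g (extSet U t) := rfl
      have h2 : F (extSet U t) = f s := by rw [hF]; simp only [hsgX]
      have h3 := hglt (extSet U t) hXU
      rw [h2] at h3
      exact h3
    · intro hsub
      exact hDC t₀ ht₀D (hsub ht₀D)
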